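/- Let W be the Banach space C([0,T];ℝ^d) with the sup norm and V_ν := {η ∈ W : η has bounded variation and ‖η‖_BV ≤ ν}. Define Λ : W × W → C([0,T];ℝ) by Λ(x, η)(t) := ∫_0^t ⟨x(s), dη(s)⟩ if η has bounded variation, and Λ(x, η) := 0 otherwise. Then for each ν > 0, the restriction of Λ to W × V_ν is continuous. -/

import Mathlib

open MeasureTheory Set Filter Topology
open scoped ENNReal Classical

noncomputable section

/-- The Lebesgue–Stieltjes measure associated to a monotone function (zero measure otherwise). -/
def lsMeasure (f : ℝ → ℝ) : Measure ℝ :=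
  if h : Monotone f then h.stieltjesFunction.measure else 0

/-- Total variation of `η` on `[0, min (max t 0) T]`, as a real number. -/
def varFun (T : ℝ) (η : ℝ → ℝ) (t : ℝ) : ℝ :=
  (eVariationOn η (Icc 0 (min (max t 0) T))).toReal

/-- `η` clamped to its values on `[0,T]`. -/
def clampFun (T : ℝ) (η : ℝ → ℝ) (t : ℝ) : ℝ := η (min (max t 0) T)

/-- The Lebesgue–Stieltjes integral `∫_0^t x dη` of a scalar function `x` against a
(right-continuous) function `η` of bounded variation on `[0,T]`, defined through the
Jordan decomposition `η = (v + η) - v` where `v` is the variation function of `η`. -/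
def stieltjesIntegral1 (T : ℝ) (x : ℝ → ℝ) (η : ℝ → ℝ) (t : ℝ) : ℝ :=
  (∫ s in Ioc 0 t, x s ∂(lsMeasure (fun u => varFun T η u + clampFun T η u))) -
    ∫ s in Ioc 0 t, x s ∂(lsMeasure (varFun T η))

/-- The coordinatewise Lebesgue–Stieltjes integral `∫_0^t ⟨x(s), dη(s)⟩` for
`ℝ^d`-valued `x` and `η`. -/
def stieltjesIntegral (T : ℝ) {d : ℕ} (x η : ℝ → EuclideanSpace ℝ (Fin d)) (t : ℝ) : ℝ :=
  ∑ i, stieltjesIntegral1 T (fun s => x s i) (fun s => η s i) t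

/-- The BV norm `‖η‖_BV = |η(0)| + V_0^T(η)`. -/
def bvNorm (T : ℝ) {E : Type*} [NormedAddCommGroup E] (η : ℝ → E) : ℝ :=
  ‖η 0‖ + (eVariationOn η (Icc 0 T)).toReal

/-- The BV norm `‖f‖_BV = |f(0)| + V_0^T(f)` of a continuous path `f : [0,T] → E`. -/
def bvNormC {T : ℝ} (hT : (0:ℝ) ≤ T) {E : Type*} [NormedAddCommGroup E]
    (f : C(Icc (0:ℝ) T, E)) : ℝ :=
  ‖f ⟨0, left_mem_Icc.mpr hT⟩‖ + (eVariationOn f (univ : Set (Icc (0:ℝ) T))).toReal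

/-- The map `Λ(x, η) := (t ↦ ∫_0^t ⟨x(s), dη(s)⟩)`, as a continuous path whenever the
Stieltjes integral defines one (so in particular whenever `η` is continuous of bounded
variation), and `0` otherwise. -/
def lambdaMap {T : ℝ} (hT : (0:ℝ) ≤ T) {d : ℕ}
    (f g : C(Icc (0:ℝ) T, EuclideanSpace ℝ (Fin d))) : C(Icc (0:ℝ) T, ℝ) :=
  if h : ∃ z : C(Icc (0:ℝ) T, ℝ), ∀ t : Icc (0:ℝ) T,
      z t = stieltjesIntegral T (IccExtend hT f) (IccExtend hT g) t
  then h.choose else 0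

/-!
Write `η = (v + η) - v` with `v` the variation function of `η`: then `∫ x dη` is a difference of
two Lebesgue–Stieltjes integrals against measures of total mass at most `3 V`, `V = V_0^T(η)`.
On each interval of the uniform partition of `[0, T]` into `n` pieces the integral differs from
`x(tᵢ) (η(tᵢ₊₁) - η(tᵢ))` by at most the oscillation of `x` times the masses, so `Λ(x, η)(t)` is
within `3 V osc(x, T/n)` of the Stieltjes sum, uniformly in `t`. Since the sums are continuous
in `t`, `Λ(x, η)` is a continuous path. For the continuity of `Λ` at `(x₀, η₀)`, split
`Λ(x, η) - Λ(x₀, η₀) = Λ(x - x₀, η) + (Λ(x₀, η) - Λ(x₀, η₀))`: the first term is at most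
`3 ν ‖x - x₀‖`; replacing both integrals in the second by Stieltjes sums costs
`6 ν osc(x₀, T/n)`, and the two sums differ by at most `2 n ‖x₀‖ ‖η - η₀‖`. Fixing `n` by
uniform continuity of `x₀` first makes the whole bound small as `(x, η) → (x₀, η₀)`.
-/

lemma min_max_eq_projIcc {T : ℝ} (hT : 0 ≤ T) (t : ℝ) : min (max t 0) T = projIcc 0 T hT t := by
  rw [coe_projIcc, max_comm, max_min_distrib_left, max_eq_right hT, min_comm]

section Jordan

variable {T : ℝ} (hT : 0 ≤ T) {η : ℝ → ℝ}

include hT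

lemma varFun_eq_projIcc (t : ℝ) :
    varFun T η t = (eVariationOn η (Icc 0 (projIcc 0 T hT t : ℝ))).toReal := by
  rw [varFun, min_max_eq_projIcc hT]

lemma clampFun_eq_projIcc (t : ℝ) : clampFun T η t = η (projIcc 0 T hT t) := by
  rw [clampFun, min_max_eq_projIcc hT]

lemma varFun_zero : varFun T η 0 = 0 := by
  rw [varFun_eq_projIcc hT, projIcc_left, Icc_self,
    eVariationOn.subsingleton _ subsingleton_singleton, ENNReal.toReal_zero]

lemma varFun_of_le {s : ℝ} (hs : T ≤ s) : varFun T η s = (eVariationOn η (Icc 0 T)).toReal := by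
  rw [varFun_eq_projIcc hT, projIcc_of_right_le _ hs]

lemma clampFun_of_le {s : ℝ} (hs : T ≤ s) : clampFun T η s = η T := by
  rw [clampFun_eq_projIcc hT, projIcc_of_right_le _ hs]

variable (hfin : eVariationOn η (Icc 0 T) ≠ ⊤)

include hfin

lemma monotone_varFun : Monotone (varFun T η) := fun s t hst => by
  rw [varFun_eq_projIcc hT, varFun_eq_projIcc hT]
  exact ENNReal.toReal_mono (ne_top_of_le_ne_top hfin (eVariationOn.mono _
    (Icc_subset_Icc_right (projIcc 0 T hT t).2.2)))
    (eVariationOn.mono _ (Icc_subset_Icc_right (monotone_projIcc hT hst)))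

lemma abs_clampFun_sub_le {s t : ℝ} (hst : s ≤ t) :
    |clampFun T η t - clampFun T η s| ≤ varFun T η t - varFun T η s := by
  set a := projIcc 0 T hT s
  set b := projIcc 0 T hT t
  have hab : (a : ℝ) ≤ b := monotone_projIcc hT hst
  have hfin' : ∀ {p q : ℝ}, 0 ≤ p → q ≤ T → eVariationOn η (Icc p q) ≠ ⊤ := fun hp hq =>
    ne_top_of_le_ne_top hfin (eVariationOn.mono _ (Icc_subset_Icc hp hq))
  have hsplit : varFun T η t = varFun T η s + (eVariationOn η (Icc (a : ℝ) b)).toReal := by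
    rw [varFun_eq_projIcc hT, varFun_eq_projIcc hT, ← ENNReal.toReal_add (hfin' le_rfl a.2.2)
      (hfin' a.2.1 b.2.2)]
    simpa only [univ_inter] using congrArg ENNReal.toReal
      (eVariationOn.Icc_add_Icc η a.2.1 hab (mem_univ _)).symm
  rw [hsplit, add_sub_cancel_left, clampFun_eq_projIcc hT, clampFun_eq_projIcc hT, ← Real.dist_eq,
    dist_comm, dist_edist]
  exact ENNReal.toReal_mono (hfin' a.2.1 b.2.2)
    (eVariationOn.edist_le η (left_mem_Icc.2 hab) (right_mem_Icc.2 hab))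

lemma monotone_varFun_add_clampFun : Monotone fun u => varFun T η u + clampFun T η u :=
  fun s t hst => by
    have := abs_le.1 (abs_clampFun_sub_le hT hfin hst)
    linarith

end Jordan

namespace Monotone

variable {F : ℝ → ℝ} (hF : Monotone F)

include hF

lemma stieltjesFunction_add_continuous {c : ℝ → ℝ} (hFc : Monotone fun u => F u + c u)
    (hc : Continuous c) (u : ℝ) :
    hFc.stieltjesFunction u = hF.stieltjesFunction u + c u :=
  rightLim_eq_of_tendsto ((hF.tendsto_rightLim u).add (hc.continuousWithinAt (s := Ioi u)))

lemma stieltjesFunction_sub_le {a b c : ℝ} (hbc : b ≤ c) (hconst : ∀ s, c ≤ s → F s = F c) :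
    hF.stieltjesFunction b - hF.stieltjesFunction a ≤ F c - F a := by
  have hGc : hF.stieltjesFunction c = F c := rightLim_eq_of_tendsto <|
    tendsto_const_nhds.congr' <| eventually_nhdsWithin_of_forall fun s hs => (hconst s hs.le).symm
  have hb : hF.stieltjesFunction b ≤ F c := hGc ▸ hF.stieltjesFunction.mono hbc
  have ha : F a ≤ hF.stieltjesFunction a := hF.le_rightLim le_rfl
  linarith

end Monotone

namespace StieltjesFunction

variable (G : StieltjesFunction ℝ) {x : ℝ → ℝ}

lemma measureReal_Ioc_of_le {a b : ℝ} (hab : a ≤ b) : G.measure.real (Ioc a b) = G b - G a := by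
  rw [measureReal_def, G.measure_Ioc, ENNReal.toReal_ofReal (sub_nonneg.2 (G.mono hab))]

lemma abs_setIntegral_Ioc_le {a b C : ℝ} (hab : a ≤ b) (hC : ∀ s ∈ Ioc a b, |x s| ≤ C) :
    |∫ s in Ioc a b, x s ∂G.measure| ≤ C * (G b - G a) := by
  rw [← G.measureReal_Ioc_of_le hab, ← Real.norm_eq_abs]
  exact norm_setIntegral_le_of_norm_le_const (G.measure_Ioc a b ▸ ENNReal.ofReal_lt_top) hC

lemma abs_setIntegral_Ioc_sub_le (hx : Continuous x) {a b r ω : ℝ} (hab : a ≤ b)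
    (hosc : ∀ s ∈ Ioc a b, |x s - x r| ≤ ω) :
    |(∫ s in Ioc a b, x s ∂G.measure) - x r * (G b - G a)| ≤ ω * (G b - G a) := by
  have hconst : IntegrableOn (fun _ => x r) (Ioc a b) G.measure :=
    integrableOn_const (G.measure_Ioc a b ▸ ENNReal.ofReal_ne_top)
  rw [mul_comm (x r), ← G.measureReal_Ioc_of_le hab, ← smul_eq_mul, ← setIntegral_const,
    ← integral_sub hx.integrableOn_Ioc hconst, G.measureReal_Ioc_of_le hab]
  exact G.abs_setIntegral_Ioc_le hab hosc

lemma abs_setIntegral_Ioc_sub_sum_le (hx : Continuous x) {u r : ℕ → ℝ} (hu : Monotone u)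
    {ω : ℝ} (n : ℕ) (hosc : ∀ i < n, ∀ s ∈ Ioc (u i) (u (i + 1)), |x s - x (r i)| ≤ ω) :
    |(∫ s in Ioc (u 0) (u n), x s ∂G.measure) -
        ∑ i ∈ Finset.range n, x (r i) * (G (u (i + 1)) - G (u i))|
      ≤ ω * (G (u n) - G (u 0)) := by
  induction n with
  | zero => simp
  | succ n ih =>
    have hstep := G.abs_setIntegral_Ioc_sub_le hx (hu n.le_succ) (hosc n n.lt_succ_self)
    have hprev := ih fun i hi => hosc i (hi.trans n.lt_succ_self)
    rw [← Ioc_union_Ioc_eq_Ioc (hu n.zero_le) (hu n.le_succ), setIntegral_union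
      (Ioc_disjoint_Ioc_of_le le_rfl) measurableSet_Ioc hx.integrableOn_Ioc hx.integrableOn_Ioc,
      Finset.sum_range_succ]
    calc _ ≤ |(∫ s in Ioc (u 0) (u n), x s ∂G.measure) -
            ∑ i ∈ Finset.range n, x (r i) * (G (u (i + 1)) - G (u i))| +
          |(∫ s in Ioc (u n) (u (n + 1)), x s ∂G.measure) - x (r n) * (G (u (n + 1)) - G (u n))| :=
          by rw [add_sub_add_comm]; exact abs_add_le _ _
      _ ≤ ω * (G (u n) - G (u 0)) + ω * (G (u (n + 1)) - G (u n)) := add_le_add hprev hstep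
      _ = ω * (G (u (n + 1)) - G (u 0)) := by ring

end StieltjesFunction

lemma continuous_clampFun {T : ℝ} {η : ℝ → ℝ} (hη : Continuous η) : Continuous (clampFun T η) :=
  hη.comp (by fun_prop)

def uniformPartition (T : ℝ) (n i : ℕ) : ℝ := T * i / n

lemma monotone_uniformPartition {T : ℝ} (hT : 0 ≤ T) (n : ℕ) : Monotone (uniformPartition T n) :=
  fun i j hij => by unfold uniformPartition; gcongr

lemma uniformPartition_mem_Icc {T : ℝ} (hT : 0 ≤ T) {n i : ℕ} (hi : i ≤ n) :
    uniformPartition T n i ∈ Icc 0 T := by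
  unfold uniformPartition
  exact ⟨by positivity, div_le_of_le_mul₀ (Nat.cast_nonneg _) hT (by gcongr)⟩

lemma uniformPartition_succ_sub (T : ℝ) (n i : ℕ) :
    uniformPartition T n (i + 1) - uniformPartition T n i = T / n := by
  unfold uniformPartition; push_cast; ring

lemma exists_uniformPartition_oscillation_le {α : Type*} [PseudoMetricSpace α] {T : ℝ}
    {x : ℝ → α} (hx : ContinuousOn x (Icc 0 T)) {ω : ℝ} (hω : 0 < ω) :
    ∃ n : ℕ, n ≠ 0 ∧ ∀ s ∈ Icc 0 T, ∀ r ∈ Icc 0 T, |s - r| ≤ T / n → dist (x s) (x r) ≤ ω := by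
  obtain ⟨δ, hδ, hx⟩ := Metric.uniformContinuousOn_iff_le.1
    (isCompact_Icc.uniformContinuousOn_of_continuous hx) ω hω
  refine ⟨⌈T / δ⌉₊ + 1, Nat.succ_ne_zero _, fun s hs r hr hsr => hx s hs r hr ?_⟩
  have hmesh : T / (⌈T / δ⌉₊ + 1 : ℕ) ≤ δ := by
    rw [div_le_iff₀ (by positivity), ← div_le_iff₀' hδ]
    push_cast
    linarith [Nat.le_ceil (T / δ)]
  exact (Real.dist_eq s r).le.trans (hsr.trans hmesh)

def stieltjesSum (T : ℝ) (x a : ℝ → ℝ) (n : ℕ) (t : ℝ) : ℝ :=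
  ∑ i ∈ Finset.range n, x (uniformPartition T n i) *
    (a (min (uniformPartition T n (i + 1)) t) - a (min (uniformPartition T n i) t))

lemma continuous_stieltjesSum (T : ℝ) (x : ℝ → ℝ) {a : ℝ → ℝ} (ha : Continuous a) (n : ℕ) :
    Continuous (stieltjesSum T x a n) := by
  unfold stieltjesSum; fun_prop

lemma abs_stieltjesSum_sub_le {x a b : ℝ → ℝ} {M δ : ℝ} (hM : ∀ s, |x s| ≤ M)
    (hδ : ∀ s, |a s - b s| ≤ δ) (T : ℝ) (n : ℕ) (t : ℝ) :
    |stieltjesSum T x a n t - stieltjesSum T x b n t| ≤ 2 * n * M * δ := by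
  rw [stieltjesSum, stieltjesSum, ← Finset.sum_sub_distrib]
  refine (Finset.abs_sum_le_sum_abs _ _).trans ?_
  calc _ ≤ ∑ _i ∈ Finset.range n, M * (δ + δ) := Finset.sum_le_sum fun i _ => by
        rw [← mul_sub, abs_mul, sub_sub_sub_comm]
        exact mul_le_mul (hM _) ((abs_sub _ _).trans (add_le_add (hδ _) (hδ _)))
          (abs_nonneg _) ((abs_nonneg _).trans (hM 0))
    _ = 2 * n * M * δ := by rw [Finset.sum_const, Finset.card_range, nsmul_eq_mul]; ring

section StieltjesIntegral

variable {T : ℝ} (hT : 0 ≤ T) {η : ℝ → ℝ} (hη : Continuous η)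
  (hfin : eVariationOn η (Icc 0 T) ≠ ⊤)

include hT hη hfin

/-- `lsMeasure` regularizes `v + η` and `v` (`v = varFun T η`) from the right; as `η` is
continuous, both acquire the same jumps, so the two Stieltjes functions still differ by `η`. -/
lemma exists_stieltjesIntegral1_eq_sub :
    ∃ G₁ G₂ : StieltjesFunction ℝ, (∀ u, G₁ u = G₂ u + clampFun T η u) ∧
      (∀ t ∈ Icc 0 T, G₁ t - G₁ 0 + (G₂ t - G₂ 0) ≤ 3 * (eVariationOn η (Icc 0 T)).toReal) ∧
      ∀ x t, stieltjesIntegral1 T x η t =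
        (∫ s in Ioc 0 t, x s ∂G₁.measure) - ∫ s in Ioc 0 t, x s ∂G₂.measure := by
  have hv := monotone_varFun hT hfin
  have hvc := monotone_varFun_add_clampFun hT hfin
  refine ⟨hvc.stieltjesFunction, hv.stieltjesFunction,
    hv.stieltjesFunction_add_continuous hvc (continuous_clampFun hη), fun t ht => ?_,
    fun x t => by simp only [stieltjesIntegral1, lsMeasure, dif_pos hv, dif_pos hvc]⟩
  have h₁ := hvc.stieltjesFunction_sub_le (a := 0) ht.2 fun s hs => by
    simp only [varFun_of_le hT hs, clampFun_of_le hT hs, varFun_of_le hT le_rfl,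
      clampFun_of_le hT le_rfl]
  have h₂ := hv.stieltjesFunction_sub_le (a := 0) ht.2 fun s hs => by
    rw [varFun_of_le hT hs, varFun_of_le hT le_rfl]
  have hc := abs_le.1 (abs_clampFun_sub_le hT hfin hT)
  simp only [varFun_zero hT, varFun_of_le hT le_rfl] at h₁ h₂ hc
  linarith

lemma abs_stieltjesIntegral1_sub_stieltjesSum_le {x : ℝ → ℝ} (hx : Continuous x) {t : ℝ}
    (ht : t ∈ Icc 0 T) {n : ℕ} (hn : n ≠ 0) {ω : ℝ}
    (hosc : ∀ s ∈ Icc 0 T, ∀ r ∈ Icc 0 T, |s - r| ≤ T / n → |x s - x r| ≤ ω) :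
    |stieltjesIntegral1 T x η t - stieltjesSum T x (clampFun T η) n t|
      ≤ ω * (3 * (eVariationOn η (Icc 0 T)).toReal) := by
  obtain ⟨G₁, G₂, hG, hmass, hI⟩ := exists_stieltjesIntegral1_eq_sub hT hη hfin
  set p := uniformPartition T n
  set u : ℕ → ℝ := fun i => min (p i) t
  have hu : Monotone u := fun i j hij => min_le_min_right t (monotone_uniformPartition hT n hij)
  have hu0 : u 0 = 0 := by simp [u, p, uniformPartition, ht.1]
  have hun : u n = t := by
    simp [u, p, uniformPartition, mul_div_cancel_right₀ T (Nat.cast_ne_zero.2 hn), ht.2]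
  have hosc' : ∀ i < n, ∀ s ∈ Ioc (u i) (u (i + 1)), |x s - x (p i)| ≤ ω := by
    intro i hi s ⟨hs₁, hs₂⟩
    have hst : s ≤ t := hs₂.trans (min_le_right _ _)
    have hps : p i < s := (min_lt_iff.1 hs₁).resolve_right hst.not_gt
    have hpi := uniformPartition_mem_Icc hT hi.le
    refine hosc s ⟨hpi.1.trans hps.le, hst.trans ht.2⟩ (p i) hpi ?_
    rw [abs_of_pos (sub_pos.2 hps), ← uniformPartition_succ_sub T n i]
    linarith [hs₂.trans (min_le_left _ _)]
  have h₁ := G₁.abs_setIntegral_Ioc_sub_sum_le hx hu n hosc'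
  have h₂ := G₂.abs_setIntegral_Ioc_sub_sum_le hx hu n hosc'
  have hsum : stieltjesSum T x (clampFun T η) n t =
      ∑ i ∈ Finset.range n, x (p i) * (G₁ (u (i + 1)) - G₁ (u i)) -
        ∑ i ∈ Finset.range n, x (p i) * (G₂ (u (i + 1)) - G₂ (u i)) := by
    simp only [stieltjesSum, hG, ← Finset.sum_sub_distrib]
    exact Finset.sum_congr rfl fun i _ => by ring
  have hω : 0 ≤ ω := (abs_nonneg _).trans (hosc 0 ⟨le_rfl, hT⟩ 0 ⟨le_rfl, hT⟩
    (by simp only [sub_self, abs_zero]; positivity))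
  rw [hI, hsum, ← hu0, ← hun, sub_sub_sub_comm]
  calc _ ≤ ω * (G₁ (u n) - G₁ (u 0)) + ω * (G₂ (u n) - G₂ (u 0)) :=
        (abs_sub _ _).trans (add_le_add h₁ h₂)
    _ ≤ _ := by rw [← mul_add, hu0, hun]; exact mul_le_mul_of_nonneg_left (hmass t ht) hω

lemma abs_stieltjesIntegral1_sub_le_of_integrand {x x₀ : ℝ → ℝ} (hx : Continuous x)
    (hx₀ : Continuous x₀) {t : ℝ} (ht : t ∈ Icc 0 T) {C : ℝ}
    (hC : ∀ s ∈ Icc 0 T, |x s - x₀ s| ≤ C) :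
    |stieltjesIntegral1 T x η t - stieltjesIntegral1 T x₀ η t|
      ≤ C * (3 * (eVariationOn η (Icc 0 T)).toReal) := by
  obtain ⟨G₁, G₂, -, hmass, hI⟩ := exists_stieltjesIntegral1_eq_sub hT hη hfin
  have hC' : ∀ s ∈ Ioc 0 t, |x s - x₀ s| ≤ C := fun s hs => hC s ⟨hs.1.le, hs.2.trans ht.2⟩
  have h₁ := G₁.abs_setIntegral_Ioc_le ht.1 hC'
  have h₂ := G₂.abs_setIntegral_Ioc_le ht.1 hC'
  have hC0 : 0 ≤ C := (abs_nonneg _).trans (hC 0 ⟨le_rfl, hT⟩)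
  rw [hI, hI, sub_sub_sub_comm, ← integral_sub hx.integrableOn_Ioc hx₀.integrableOn_Ioc,
    ← integral_sub hx.integrableOn_Ioc hx₀.integrableOn_Ioc]
  calc _ ≤ C * (G₁ t - G₁ 0) + C * (G₂ t - G₂ 0) := (abs_sub _ _).trans (add_le_add h₁ h₂)
    _ ≤ _ := by rw [← mul_add]; exact mul_le_mul_of_nonneg_left (hmass t ht) hC0

lemma continuousOn_stieltjesIntegral1 {x : ℝ → ℝ} (hx : Continuous x) :
    ContinuousOn (stieltjesIntegral1 T x η) (Icc 0 T) := by
  refine continuousOn_of_uniform_approx_of_continuousOn fun U hU => ?_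
  obtain ⟨ε, hε, hεU⟩ := Metric.mem_uniformity_dist.1 hU
  set V := (eVariationOn η (Icc 0 T)).toReal
  have hV : 0 ≤ V := ENNReal.toReal_nonneg
  obtain ⟨n, hn, hosc⟩ :=
    exists_uniformPartition_oscillation_le hx.continuousOn (by positivity : 0 < ε / (3 * V + 1))
  refine ⟨stieltjesSum T x (clampFun T η) n,
    (continuous_stieltjesSum T x (continuous_clampFun hη) n).continuousOn, fun t ht => hεU ?_⟩
  rw [Real.dist_eq]
  calc _ ≤ ε / (3 * V + 1) * (3 * V) := abs_stieltjesIntegral1_sub_stieltjesSum_le hT hη hfin hx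
        ht hn fun s hs r hr hsr => (Real.dist_eq _ _).symm.le.trans (hosc s hs r hr hsr)
    _ < ε := by
      rw [div_mul_eq_mul_div, div_lt_iff₀ (by positivity)]
      nlinarith

lemma abs_stieltjesIntegral1_sub_le {η₀ : ℝ → ℝ} (hη₀ : Continuous η₀)
    (hfin₀ : eVariationOn η₀ (Icc 0 T) ≠ ⊤) {ν : ℝ} (hν : (eVariationOn η (Icc 0 T)).toReal ≤ ν)
    (hν₀ : (eVariationOn η₀ (Icc 0 T)).toReal ≤ ν) {x x₀ : ℝ → ℝ} (hx : Continuous x)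
    (hx₀ : Continuous x₀) {t : ℝ} (ht : t ∈ Icc 0 T) {n : ℕ} (hn : n ≠ 0) {ω : ℝ}
    (hosc₀ : ∀ s ∈ Icc 0 T, ∀ r ∈ Icc 0 T, |s - r| ≤ T / n → |x₀ s - x₀ r| ≤ ω)
    {δx : ℝ} (hδx : ∀ s ∈ Icc 0 T, |x s - x₀ s| ≤ δx) {δη : ℝ} (hδη : ∀ s, |η s - η₀ s| ≤ δη)
    {M : ℝ} (hM : ∀ s, |x₀ s| ≤ M) :
    |stieltjesIntegral1 T x η t - stieltjesIntegral1 T x₀ η₀ t|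
      ≤ 3 * ν * δx + 6 * ν * ω + 2 * n * M * δη := by
  set V := (eVariationOn η (Icc 0 T)).toReal
  set V₀ := (eVariationOn η₀ (Icc 0 T)).toReal
  have hδx0 : 0 ≤ δx := (abs_nonneg _).trans (hδx 0 ⟨le_rfl, hT⟩)
  have hω : 0 ≤ ω := (abs_nonneg _).trans (hosc₀ 0 ⟨le_rfl, hT⟩ 0 ⟨le_rfl, hT⟩
    (by simp only [sub_self, abs_zero]; positivity))
  have h₁ := abs_le.1 (abs_stieltjesIntegral1_sub_le_of_integrand hT hη hfin hx hx₀ ht hδx)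
  have h₂ := abs_le.1 (abs_stieltjesIntegral1_sub_stieltjesSum_le hT hη hfin hx₀ ht hn hosc₀)
  have h₃ := abs_le.1 (abs_stieltjesIntegral1_sub_stieltjesSum_le hT hη₀ hfin₀ hx₀ ht hn hosc₀)
  have h₄ := abs_le.1 (abs_stieltjesSum_sub_le (a := clampFun T η) (b := clampFun T η₀) hM
    (fun s => hδη _) T n t)
  have e₁ : δx * (3 * V) ≤ δx * (3 * ν) := by gcongr
  have e₂ : ω * (3 * V) ≤ ω * (3 * ν) := by gcongr
  have e₃ : ω * (3 * V₀) ≤ ω * (3 * ν) := by gcongr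
  rw [abs_le]
  constructor <;> linarith [h₁.1, h₁.2, h₂.1, h₂.2, h₃.1, h₃.2, h₄.1, h₄.2]

end StieltjesIntegral

lemma eVariationOn_IccExtend {E : Type*} [PseudoEMetricSpace E] {a b : ℝ} (hab : a ≤ b)
    (f : Icc a b → E) : eVariationOn (IccExtend hab f) (Icc a b) = eVariationOn f univ := by
  rw [IccExtend, eVariationOn.comp_eq_of_monotoneOn f _ ((monotone_projIcc hab).monotoneOn _),
    (projIcc_surjOn hab).image_eq_of_mapsTo (mapsTo_univ _ _)]

section EuclideanPath

variable {ι : Type*} {a b : ℝ} (hab : a ≤ b)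

lemma continuous_IccExtend_apply (g : C(Icc a b, EuclideanSpace ℝ ι)) (i : ι) :
    Continuous fun s => IccExtend hab g s i := by
  fun_prop

variable [Fintype ι]

lemma eVariationOn_IccExtend_apply_le (g : Icc a b → EuclideanSpace ℝ ι) (i : ι) :
    eVariationOn (fun s => IccExtend hab g s i) (Icc a b) ≤ eVariationOn g univ := by
  have hcoord : LipschitzOnWith 1 (fun v : EuclideanSpace ℝ ι => v i) univ :=
    (LipschitzWith.of_edist_le fun v w => PiLp.edist_apply_le v w i).lipschitzOnWith
  have h := hcoord.comp_eVariationOn_le (mapsTo_univ (IccExtend hab g) (Icc a b))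
  rwa [ENNReal.coe_one, one_mul, eVariationOn_IccExtend] at h

lemma abs_IccExtend_apply_sub_le_dist (f g : C(Icc a b, EuclideanSpace ℝ ι)) (s : ℝ) (i : ι) :
    |IccExtend hab f s i - IccExtend hab g s i| ≤ dist f g :=
  ((Real.dist_eq _ _).symm.le.trans (PiLp.dist_apply_le _ _ i)).trans
    (ContinuousMap.dist_apply_le_dist _)

lemma abs_IccExtend_apply_le_norm (f : C(Icc a b, EuclideanSpace ℝ ι)) (s : ℝ) (i : ι) :
    |IccExtend hab f s i| ≤ ‖f‖ :=
  (PiLp.norm_apply_le _ i).trans (f.norm_coe_le_norm _)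

end EuclideanPath

section LambdaMap

variable {T : ℝ} (hT : 0 ≤ T) {d : ℕ}

lemma toReal_eVariationOn_IccExtend_apply_le_bvNormC {g : C(Icc 0 T, EuclideanSpace ℝ (Fin d))}
    (hg : BoundedVariationOn g univ) (i : Fin d) :
    (eVariationOn (fun s => IccExtend hT g s i) (Icc 0 T)).toReal ≤ bvNormC hT g :=
  (ENNReal.toReal_mono hg (eVariationOn_IccExtend_apply_le hT g i)).trans
    (le_add_of_nonneg_left (norm_nonneg _))

lemma lambdaMap_apply (f g : C(Icc 0 T, EuclideanSpace ℝ (Fin d)))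
    (hg : BoundedVariationOn g univ) (t : Icc 0 T) :
    lambdaMap hT f g t = stieltjesIntegral T (IccExtend hT f) (IccExtend hT g) t := by
  have hcont : ContinuousOn (stieltjesIntegral T (IccExtend hT f) (IccExtend hT g)) (Icc 0 T) :=
    continuousOn_finsetSum _ fun i _ => continuousOn_stieltjesIntegral1 hT
      (continuous_IccExtend_apply hT g i)
      (ne_top_of_le_ne_top hg (eVariationOn_IccExtend_apply_le hT g i))
      (continuous_IccExtend_apply hT f i)
  have hex : ∃ z : C(Icc 0 T, ℝ), ∀ t : Icc 0 T,
      z t = stieltjesIntegral T (IccExtend hT f) (IccExtend hT g) t :=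
    ⟨⟨_, hcont.domRestrict⟩, fun _ => rfl⟩
  rw [lambdaMap, dif_pos hex]
  exact hex.choose_spec t

lemma dist_lambdaMap_le {f f₀ g g₀ : C(Icc 0 T, EuclideanSpace ℝ (Fin d))} {ν : ℝ}
    (hg : BoundedVariationOn g univ) (hgν : bvNormC hT g ≤ ν)
    (hg₀ : BoundedVariationOn g₀ univ) (hg₀ν : bvNormC hT g₀ ≤ ν) {n : ℕ} (hn : n ≠ 0) {ω : ℝ}
    (hosc : ∀ s ∈ Icc 0 T, ∀ r ∈ Icc 0 T, |s - r| ≤ T / n →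
      dist (IccExtend hT f₀ s) (IccExtend hT f₀ r) ≤ ω) :
    dist (lambdaMap hT f g) (lambdaMap hT f₀ g₀)
      ≤ d * (3 * ν * dist f f₀ + 6 * ν * ω + 2 * n * ‖f₀‖ * dist g g₀) := by
  have : Nonempty (Icc 0 T) := ⟨⟨0, left_mem_Icc.2 hT⟩⟩
  refine ContinuousMap.dist_le_iff_of_nonempty.2 fun t => ?_
  rw [lambdaMap_apply hT f g hg, lambdaMap_apply hT f₀ g₀ hg₀, Real.dist_eq, stieltjesIntegral,
    stieltjesIntegral, ← Finset.sum_sub_distrib]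
  refine (Finset.abs_sum_le_sum_abs _ _).trans ?_
  calc _ ≤ ∑ _i : Fin d, (3 * ν * dist f f₀ + 6 * ν * ω + 2 * n * ‖f₀‖ * dist g g₀) :=
        Finset.sum_le_sum fun i _ => abs_stieltjesIntegral1_sub_le hT
          (continuous_IccExtend_apply hT g i)
          (ne_top_of_le_ne_top hg (eVariationOn_IccExtend_apply_le hT g i))
          (continuous_IccExtend_apply hT g₀ i)
          (ne_top_of_le_ne_top hg₀ (eVariationOn_IccExtend_apply_le hT g₀ i))
          ((toReal_eVariationOn_IccExtend_apply_le_bvNormC hT hg i).trans hgν)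
          ((toReal_eVariationOn_IccExtend_apply_le_bvNormC hT hg₀ i).trans hg₀ν)
          (continuous_IccExtend_apply hT f i) (continuous_IccExtend_apply hT f₀ i) t.2 hn
          (fun s hs r hr hsr => ((Real.dist_eq _ _).symm.le.trans (PiLp.dist_apply_le _ _ i)).trans
            (hosc s hs r hr hsr))
          (fun s _ => abs_IccExtend_apply_sub_le_dist hT f f₀ s i)
          (fun s => abs_IccExtend_apply_sub_le_dist hT g g₀ s i)
          (fun s => abs_IccExtend_apply_le_norm hT f₀ s i)
    _ = _ := by rw [Finset.sum_const, Finset.card_univ, Fintype.card_fin, nsmul_eq_mul]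

end LambdaMap

lemma continuousWithinAt_of_forall_dist_le {α β : Type*} [PseudoMetricSpace α]
    [PseudoMetricSpace β] {F : α → β} {s : Set α} {x₀ : α}
    (h : ∀ ε > 0, ∃ A, ∀ x ∈ s, dist (F x) (F x₀) ≤ ε + A * dist x x₀) :
    ContinuousWithinAt F s x₀ := by
  refine Metric.continuousWithinAt_iff.2 fun ε hε => ?_
  obtain ⟨A, hA⟩ := h (ε / 2) (half_pos hε)
  refine ⟨ε / (2 * (|A| + 1)), by positivity, fun x hx hxx₀ => ?_⟩
  have : A * dist x x₀ < ε / 2 := calc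
    A * dist x x₀ ≤ (|A| + 1) * dist x x₀ :=
      mul_le_mul_of_nonneg_right (by linarith [le_abs_self A]) dist_nonneg
    _ < (|A| + 1) * (ε / (2 * (|A| + 1))) := by gcongr
    _ = ε / 2 := by field_simp
  linarith [hA x hx]

/-- With `W = C([0,T];ℝ^d)` and
`V_ν = {η ∈ W : η of bounded variation, ‖η‖_BV ≤ ν}`, the map
`Λ(x,η) = (t ↦ ∫_0^t ⟨x(s), dη(s)⟩)` (set to `0` off bounded-variation paths) is
continuous on `W × V_ν`, for each `ν > 0`. -/
theorem stmt7 {d : ℕ} (T : ℝ) (hT : (0:ℝ) ≤ T) (ν : ℝ) (hν : 0 < ν) :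
    ContinuousOn
      (fun p : C(Icc (0:ℝ) T, EuclideanSpace ℝ (Fin d)) ×
          C(Icc (0:ℝ) T, EuclideanSpace ℝ (Fin d)) => lambdaMap hT p.1 p.2)
      ((univ : Set C(Icc (0:ℝ) T, EuclideanSpace ℝ (Fin d))) ×ˢ
        {g : C(Icc (0:ℝ) T, EuclideanSpace ℝ (Fin d)) |
          BoundedVariationOn (⇑g) (univ : Set (Icc (0:ℝ) T)) ∧ bvNormC hT g ≤ ν}) := by
  rintro ⟨f₀, g₀⟩ ⟨-, hg₀, hg₀ν⟩
  refine continuousWithinAt_of_forall_dist_le fun ε hε => ?_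
  set ω := ε / (6 * d * ν + 1)
  obtain ⟨n, hn, hosc⟩ := exists_uniformPartition_oscillation_le
    (f₀.continuous.comp continuous_projIcc).continuousOn (by positivity : 0 < ω)
  refine ⟨d * (3 * ν + 2 * n * ‖f₀‖), ?_⟩
  rintro ⟨f, g⟩ ⟨-, hg, hgν⟩
  have hff₀ : dist f f₀ ≤ dist (f, g) (f₀, g₀) := le_max_left _ _
  have hgg₀ : dist g g₀ ≤ dist (f, g) (f₀, g₀) := le_max_right _ _
  have hω : d * (6 * ν * ω) ≤ ε := by
    rw [show d * (6 * ν * ω) = 6 * d * ν / (6 * d * ν + 1) * ε by ring]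
    exact mul_le_of_le_one_left hε.le ((div_le_one (by positivity)).2 (by linarith))
  calc _ ≤ d * (3 * ν * dist f f₀ + 6 * ν * ω + 2 * n * ‖f₀‖ * dist g g₀) :=
        dist_lambdaMap_le hT hg hgν hg₀ hg₀ν hn hosc
    _ ≤ d * (3 * ν * dist (f, g) (f₀, g₀) + 6 * ν * ω + 2 * n * ‖f₀‖ * dist (f, g) (f₀, g₀)) := by
        gcongr
    _ = d * (6 * ν * ω) + d * (3 * ν + 2 * n * ‖f₀‖) * dist (f, g) (f₀, g₀) := by ring
    _ ≤ _ := by gcongr
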